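/- Let A be a category with finite products and finite coproducts, equipped with a natural family of isomorphisms ψ_{Y,Z} : Y + Z ≅ Y × Z. Then A is semi-additive: A is pointed, and the canonical map α_{Y,Z} : Y + Z → Y × Z (with components the identities and zero morphisms) is an isomorphism for all Y, Z. -/

import Mathlib

open CategoryTheory CategoryTheory.Limits

/-- The zero morphism `Y ⟶ Z` in a pointed category (initial object also terminal). -/
noncomputable def zeroMor {A : Type*} [Category A] [HasInitial A] [HasTerminal A]
    (pointed : IsIso (terminal.from (⊥_ A))) (Y Z : A) : Y ⟶ Z :=
  terminal.from Y ≫ inv (terminal.from (⊥_ A)) ≫ initial.to Z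

/-- The canonical map `Y + Z ⟶ Y × Z` in a pointed category. -/
noncomputable def alphaMap {A : Type*} [Category A] [HasFiniteProducts A] [HasFiniteCoproducts A]
    (pointed : IsIso (terminal.from (⊥_ A))) (Y Z : A) : Y ⨿ Z ⟶ Y ⨯ Z :=
  coprod.desc (prod.lift (𝟙 Y) (zeroMor pointed Y Z)) (prod.lift (zeroMor pointed Z Y) (𝟙 Z))

/-!
A morphism `⊤ ⟶ ⊥` is read off `ψ_{⊥,⊤}`, so the category is pointed. Naturality of `ψ` along
the maps `⊥ ⟶ Z` shows that `ψ_{Y,Z}` is diagonal: `ψ_{Y,Z} = α_{Y,Z} ≫ (x_Y × w_Z)`, where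
`x_Y` is the component of `ψ_{Y,⊥}` on `Y` and `w_Z` that of `ψ_{⊥,Z}` on `Z`. These are
isomorphisms because `Y ⨿ ⊥ ≅ Y ≅ Y ⨯ ⊥`, hence so is `α_{Y,Z}`.
-/

section Pointed

variable {A : Type*} [Category A] [HasInitial A] [HasTerminal A]

theorem isIso_terminal_from_initial_of_hom (f : ⊤_ A ⟶ ⊥_ A) :
    IsIso (terminal.from (⊥_ A)) :=
  ⟨f, initialIsInitial.hom_ext _ _, terminalIsTerminal.hom_ext _ _⟩

variable (pointed : IsIso (terminal.from (⊥_ A)))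

noncomputable def isTerminalInitialOfIsIso : IsTerminal (⊥_ A) :=
  IsTerminal.ofIso terminalIsTerminal (asIso (terminal.from (⊥_ A))).symm

theorem zeroMor_comp {Y Z Z' : A} (g : Z ⟶ Z') :
    zeroMor pointed Y Z ≫ g = zeroMor pointed Y Z' := by
  simp [zeroMor]

theorem comp_initial_to_eq_zeroMor {Y Z : A} (p : Y ⟶ ⊥_ A) :
    p ≫ initial.to Z = zeroMor pointed Y Z := by
  rw [(isTerminalInitialOfIsIso pointed).hom_ext p
    (terminal.from Y ≫ inv (terminal.from (⊥_ A))), zeroMor, Category.assoc]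

end Pointed

section Diagonal

variable {A : Type*} [Category A] [HasFiniteProducts A] [HasFiniteCoproducts A]
  (pointed : IsIso (terminal.from (⊥_ A)))
include pointed

theorem isIso_inl_comp_hom_comp_fst {Y : A} (e : Y ⨿ ⊥_ A ≅ Y ⨯ ⊥_ A) :
    IsIso (coprod.inl ≫ e.hom ≫ prod.fst) := by
  have : IsIso (coprod.inl : Y ⟶ Y ⨿ ⊥_ A) := (coprod.rightUnitor Y).isIso_inv
  have : IsIso (prod.fst : Y ⨯ ⊥_ A ⟶ Y) :=
    (BinaryFan.isLimit_iff_isIso_fst (isTerminalInitialOfIsIso pointed)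
      (BinaryFan.mk prod.fst prod.snd)).mp ⟨prodIsProd _ _⟩
  infer_instance

theorem isIso_inr_comp_hom_comp_snd {Z : A} (e : (⊥_ A) ⨿ Z ≅ (⊥_ A) ⨯ Z) :
    IsIso (coprod.inr ≫ e.hom ≫ prod.snd) := by
  have : IsIso (coprod.inr : Z ⟶ (⊥_ A) ⨿ Z) := (coprod.leftUnitor Z).isIso_inv
  have : IsIso (prod.snd : (⊥_ A) ⨯ Z ⟶ Z) :=
    (BinaryFan.isLimit_iff_isIso_snd (isTerminalInitialOfIsIso pointed)
      (BinaryFan.mk prod.fst prod.snd)).mp ⟨prodIsProd _ _⟩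
  infer_instance

theorem eq_alphaMap_comp_prod_map {Y Y' Z Z' : A} (f : Y ⨿ Z ⟶ Y' ⨯ Z') (a : Y ⟶ Y')
    (d : Z ⟶ Z') (hl : coprod.inl ≫ f = prod.lift a (zeroMor pointed Y Z'))
    (hr : coprod.inr ≫ f = prod.lift (zeroMor pointed Z Y') d) :
    f = alphaMap pointed Y Z ≫ prod.map a d := by
  ext1
  · rw [hl, alphaMap, coprod.inl_desc_assoc, prod.lift_map, Category.id_comp, zeroMor_comp]
  · rw [hr, alphaMap, coprod.inr_desc_assoc, prod.lift_map, Category.id_comp, zeroMor_comp]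

end Diagonal

section Natural

variable {A : Type*} [Category A] [HasFiniteProducts A] [HasFiniteCoproducts A]
  (pointed : IsIso (terminal.from (⊥_ A))) (ψ : ∀ Y Z : A, Y ⨿ Z ≅ Y ⨯ Z)
  (nat : ∀ {Y Y' Z Z' : A} (g : Y ⟶ Y') (h : Z ⟶ Z'),
    coprod.map g h ≫ (ψ Y' Z').hom = (ψ Y Z).hom ≫ prod.map g h)
include nat

theorem inl_comp_hom_eq_lift (Y Z : A) :
    coprod.inl ≫ (ψ Y Z).hom =
      prod.lift (coprod.inl ≫ (ψ Y (⊥_ A)).hom ≫ prod.fst) (zeroMor pointed Y Z) := by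
  have h := congrArg (coprod.inl ≫ ·) (nat (𝟙 Y) (initial.to Z))
  simp only [coprod.inl_map_assoc, Category.id_comp] at h
  rw [h, ← comp_initial_to_eq_zeroMor pointed (coprod.inl ≫ (ψ Y (⊥_ A)).hom ≫ prod.snd)]
  ext1
  · simp only [Category.assoc, prod.map_fst, Category.comp_id]
    exact (prod.lift_fst _ _).symm
  · simp only [Category.assoc, prod.map_snd]
    exact (prod.lift_snd _ _).symm

theorem inr_comp_hom_eq_lift (Y Z : A) :
    coprod.inr ≫ (ψ Y Z).hom =
      prod.lift (zeroMor pointed Z Y) (coprod.inr ≫ (ψ (⊥_ A) Z).hom ≫ prod.snd) := by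
  have h := congrArg (coprod.inr ≫ ·) (nat (initial.to Y) (𝟙 Z))
  simp only [coprod.inr_map_assoc, Category.id_comp] at h
  rw [h, ← comp_initial_to_eq_zeroMor pointed (coprod.inr ≫ (ψ (⊥_ A) Z).hom ≫ prod.fst)]
  ext1
  · simp only [Category.assoc, prod.map_fst]
    exact (prod.lift_fst _ _).symm
  · simp only [Category.assoc, prod.map_snd, Category.comp_id]
    exact (prod.lift_snd _ _).symm

theorem isIso_alphaMap_of_natural (Y Z : A) : IsIso (alphaMap pointed Y Z) := by
  set x := coprod.inl ≫ (ψ Y (⊥_ A)).hom ≫ prod.fst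
  set w := coprod.inr ≫ (ψ (⊥_ A) Z).hom ≫ prod.snd
  have : IsIso x := isIso_inl_comp_hom_comp_fst pointed _
  have : IsIso w := isIso_inr_comp_hom_comp_snd pointed _
  have : IsIso (alphaMap pointed Y Z ≫ prod.map x w) := by
    rw [← eq_alphaMap_comp_prod_map pointed (ψ Y Z).hom x w
      (inl_comp_hom_eq_lift pointed ψ nat Y Z) (inr_comp_hom_eq_lift pointed ψ nat Y Z)]
    infer_instance
  exact IsIso.of_isIso_comp_right _ (prod.map x w)

end Natural

theorem stmt_13 {A : Type*} [Category A] [HasFiniteProducts A] [HasFiniteCoproducts A]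
    (ψ : ∀ Y Z : A, Y ⨿ Z ≅ Y ⨯ Z)
    (nat : ∀ {Y Y' Z Z' : A} (g : Y ⟶ Y') (h : Z ⟶ Z'),
      coprod.map g h ≫ (ψ Y' Z').hom = (ψ Y Z).hom ≫ prod.map g h) :
    ∃ pointed : IsIso (terminal.from (⊥_ A)),
      ∀ Y Z : A, IsIso (alphaMap pointed Y Z) :=
  have pointed :=
    isIso_terminal_from_initial_of_hom (coprod.inr ≫ (ψ (⊥_ A) (⊤_ A)).hom ≫ prod.fst)
  ⟨pointed, isIso_alphaMap_of_natural pointed ψ nat⟩
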